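/- Let x, y > 0 with (x-1)(y-1) < 0 (an overtaking interaction of a backward shock and a backward rarefaction, in either order). Then the unique B > 0 solving φ←(B) + xy·φ←(B/(xy)) = φ←(x) + x·φ←(y) satisfies B > xy; that is, the outgoing forward wave is always a shock. -/

import Mathlib

open Real Set Filter Topology

/-- κ = √γ / α with α = (γ-1)/2. -/
noncomputable def kappa (γ : ℝ) : ℝ := Real.sqrt γ / ((γ - 1) / 2)

/-- The shock branch x ↦ √((1 - x^{-1/α})(x^{γ/α} - 1)), α = (γ-1)/2. -/
noncomputable def shockPart (γ : ℝ) (x : ℝ) : ℝ :=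
  Real.sqrt ((1 - x ^ (-(1 : ℝ) / ((γ - 1) / 2))) * (x ^ (γ / ((γ - 1) / 2)) - 1))

/-- Backward auxiliary function φ← : rarefaction branch κ(x-1) for x ≤ 1,
    shock branch for x ≥ 1 (they agree, with value 0, at x = 1). -/
noncomputable def phiB (γ : ℝ) (x : ℝ) : ℝ :=
  if x ≤ 1 then kappa γ * (x - 1) else shockPart γ x

/-- Forward auxiliary function φ→ : shock branch -√(...) for x ≤ 1,
    rarefaction branch κ(x-1) for x ≥ 1 (they agree, with value 0, at x = 1). -/
noncomputable def phiF (γ : ℝ) (x : ℝ) : ℝ :=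
  if x < 1 then -shockPart γ x else kappa γ * (x - 1)

/-!
If `B ≤ xy`, monotonicity of `φ←` gives `φ←(B) ≤ φ←(xy)` and `φ←(B/(xy)) ≤ 0`, so it suffices
that `φ←(xy) < φ←(x) + x φ←(y)`. Writing `S` for the shock branch, this reduces case by case to
the strict monotonicity on `[1, ∞)` of `S t - κ t` and of `(S t + κ) / t`.

With `p = t ^ a`, `q = t ^ b` (`a = -1/α`, `b = γ/α`, so `a + b = 2` and `κ² = -ab`) and
`S² = g = (1 - p)(q - 1)`, `t g' = X + Y` with `X = bq(1 - p)`, `Y = -ap(q - 1)`, and the two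
derivative conditions read `2κt√g < X + Y` and `2κ√g + 2g < X + Y`, i.e. `2κ√g < U + V` for
`U = b(1 - p)`, `V = -a(q - 1)`. Since `κ²t²g = XY` and `κ²g = UV`, both are strict AM–GM;
`X ≠ Y` and `U ≠ V` follow from `(1 - t ^ (-v)) / v < log t < (t ^ u - 1) / u`.
-/

lemma mul_one_sub_rpow_neg_lt {t u v : ℝ} (hu : 0 < u) (hv : 0 < v) (ht : 1 < t) :
    u * (1 - t ^ (-v)) < v * (t ^ u - 1) := by
  have ht0 : 0 < t := by linarith
  have hlog_lt : u * log t < t ^ u - 1 := by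
    rw [← log_rpow ht0]
    exact log_lt_sub_one_of_pos (rpow_pos_of_pos ht0 u) (one_lt_rpow ht hu).ne'
  have hlt_log : 1 - t ^ (-v) < v * log t := by
    have := log_lt_sub_one_of_pos (rpow_pos_of_pos ht0 (-v))
      (rpow_lt_one_of_one_lt_of_neg ht (neg_neg_of_pos hv)).ne
    rw [log_rpow ht0] at this
    linarith
  calc u * (1 - t ^ (-v)) < u * (v * log t) := by gcongr
    _ = v * (u * log t) := by ring
    _ < v * (t ^ u - 1) := by gcongr

lemma lt_add_of_sq_eq_four_mul {c X Y : ℝ} (h : c ^ 2 = 4 * X * Y) (hXY : X ≠ Y)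
    (hsum : 0 ≤ X + Y) : c < X + Y := by
  have : c ^ 2 < (X + Y) ^ 2 := by nlinarith [sq_pos_of_ne_zero (sub_ne_zero.2 hXY)]
  exact (le_abs_self c).trans_lt (abs_lt_of_sq_lt_sq this hsum)

section ShockRadicand

variable {a b k t : ℝ}

noncomputable def shockRadicand (a b t : ℝ) : ℝ := (1 - t ^ a) * (t ^ b - 1)

lemma shockRadicand_one : shockRadicand a b 1 = 0 := by
  simp [shockRadicand]

lemma shockRadicand_pos (ha : a < 0) (hb : 0 < b) (ht : 1 < t) : 0 < shockRadicand a b t :=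
  mul_pos (sub_pos.2 (rpow_lt_one_of_one_lt_of_neg ht ha)) (sub_pos.2 (one_lt_rpow ht hb))

lemma hasDerivAt_shockRadicand (ht : 0 < t) :
    HasDerivAt (shockRadicand a b)
      ((b * t ^ b * (1 - t ^ a) - a * t ^ a * (t ^ b - 1)) / t) t := by
  have hA := (hasDerivAt_rpow_const (p := a) (Or.inl ht.ne')).const_sub 1
  have hB := (hasDerivAt_rpow_const (p := b) (Or.inl ht.ne')).sub_const 1
  refine (hA.mul hB).congr_deriv ?_
  rw [rpow_sub_one ht.ne', rpow_sub_one ht.ne']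
  ring

lemma two_mul_mul_sqrt_shockRadicand_lt (ha : a < 0) (hb : 0 < b) (hab : a + b = 2)
    (hk : k ^ 2 = -(a * b)) (ht : 1 < t) :
    2 * k * t * √(shockRadicand a b t) < b * t ^ b * (1 - t ^ a) - a * t ^ a * (t ^ b - 1) := by
  have ht0 : 0 < t := by linarith
  have hp : 0 < t ^ a := rpow_pos_of_pos ht0 a
  have hq : 0 < t ^ b := rpow_pos_of_pos ht0 b
  have hpq : t ^ a * t ^ b = t ^ 2 := by rw [← rpow_add ht0, hab, rpow_two]
  have hqq : t ^ b * t ^ (-b) = 1 := by rw [← rpow_add ht0, add_neg_cancel, rpow_zero]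
  have hpp : t ^ a * t ^ (-a) = 1 := by rw [← rpow_add ht0, add_neg_cancel, rpow_zero]
  have hYX : -a * t ^ a * (t ^ b - 1) < b * t ^ b * (1 - t ^ a) :=
    calc -a * t ^ a * (t ^ b - 1) = (t ^ a * t ^ b) * (-a * (1 - t ^ (-b))) := by
          linear_combination (-a * t ^ a) * hqq
      _ < (t ^ a * t ^ b) * (b * (t ^ (-a) - 1)) := by
          exact mul_lt_mul_of_pos_left (mul_one_sub_rpow_neg_lt (neg_pos.2 ha) hb ht) (mul_pos hp hq)
      _ = b * t ^ b * (1 - t ^ a) := by linear_combination (b * t ^ b) * hpp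
  have hsq : (2 * k * t * √(shockRadicand a b t)) ^ 2
      = 4 * (b * t ^ b * (1 - t ^ a)) * (-a * t ^ a * (t ^ b - 1)) := by
    rw [mul_pow, sq_sqrt (shockRadicand_pos ha hb ht).le, shockRadicand]
    linear_combination (4 * t ^ 2 * (1 - t ^ a) * (t ^ b - 1)) * hk
      + (4 * a * b * (1 - t ^ a) * (t ^ b - 1)) * hpq
  have hX : 0 < b * t ^ b * (1 - t ^ a) :=
    mul_pos (mul_pos hb hq) (sub_pos.2 (rpow_lt_one_of_one_lt_of_neg ht ha))
  have hY : 0 < -a * t ^ a * (t ^ b - 1) :=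
    mul_pos (mul_pos (neg_pos.2 ha) hp) (sub_pos.2 (one_lt_rpow ht hb))
  have := lt_add_of_sq_eq_four_mul hsq hYX.ne' (by positivity)
  linarith


lemma two_mul_sqrt_shockRadicand_add_lt (ha : a < 0) (hb : 0 < b) (hab : a + b = 2)
    (hk : k ^ 2 = -(a * b)) (ht : 1 < t) :
    2 * k * √(shockRadicand a b t) + 2 * shockRadicand a b t
      < b * t ^ b * (1 - t ^ a) - a * t ^ a * (t ^ b - 1) := by
  have hUV : b * (1 - t ^ a) < -a * (t ^ b - 1) := by
    simpa using mul_one_sub_rpow_neg_lt hb (neg_pos.2 ha) ht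
  have hsq : (2 * k * √(shockRadicand a b t)) ^ 2 = 4 * (b * (1 - t ^ a)) * (-a * (t ^ b - 1)) := by
    rw [mul_pow, sq_sqrt (shockRadicand_pos ha hb ht).le, shockRadicand]
    linear_combination (4 * (1 - t ^ a) * (t ^ b - 1)) * hk
  have hU : 0 < b * (1 - t ^ a) := mul_pos hb (sub_pos.2 (rpow_lt_one_of_one_lt_of_neg ht ha))
  have := lt_add_of_sq_eq_four_mul hsq hUV.ne (by linarith)
  have hg : shockRadicand a b t = (1 - t ^ a) * (t ^ b - 1) := rfl
  linear_combination this - ((1 - t ^ a) * (t ^ b - 1)) * hab + 2 * hg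

lemma continuousOn_sqrt_shockRadicand : ContinuousOn (fun t => √(shockRadicand a b t)) (Ici 1) :=
  fun _ ht => (hasDerivAt_shockRadicand (zero_lt_one.trans_le ht)).continuousAt.sqrt.continuousWithinAt

lemma strictMonoOn_sqrt_shockRadicand_sub_mul (ha : a < 0) (hb : 0 < b) (hab : a + b = 2)
    (hk : k ^ 2 = -(a * b)) : StrictMonoOn (fun t => √(shockRadicand a b t) - k * t) (Ici 1) := by
  refine strictMonoOn_of_deriv_pos (convex_Ici 1)
    (continuousOn_sqrt_shockRadicand.sub (continuousOn_const.mul continuousOn_id)) fun t ht => ?_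
  rw [interior_Ici] at ht
  have hg := shockRadicand_pos ha hb ht
  have hD : HasDerivAt (fun t => √(shockRadicand a b t) - k * t)
      ((b * t ^ b * (1 - t ^ a) - a * t ^ a * (t ^ b - 1)) / t / (2 * √(shockRadicand a b t))
        - k * 1) t :=
    ((hasDerivAt_shockRadicand (zero_lt_one.trans ht)).sqrt hg.ne').sub
      ((hasDerivAt_id t).const_mul k)
  have := two_mul_mul_sqrt_shockRadicand_lt ha hb hab hk ht
  rw [hD.deriv, mul_one, sub_pos, lt_div_iff₀ (by positivity), lt_div_iff₀ (zero_lt_one.trans ht)]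
  linarith

lemma strictMonoOn_sqrt_shockRadicand_add_div (ha : a < 0) (hb : 0 < b) (hab : a + b = 2)
    (hk : k ^ 2 = -(a * b)) : StrictMonoOn (fun t => (√(shockRadicand a b t) + k) / t) (Ici 1) := by
  refine strictMonoOn_of_deriv_pos (convex_Ici 1)
    ((continuousOn_sqrt_shockRadicand.add continuousOn_const).div continuousOn_id
      fun t ht => (zero_lt_one.trans_le ht).ne') fun t ht => ?_
  rw [interior_Ici] at ht
  have ht0 : 0 < t := zero_lt_one.trans ht
  have hg := shockRadicand_pos ha hb ht
  have hD : HasDerivAt (fun t => (√(shockRadicand a b t) + k) / t)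
      (((b * t ^ b * (1 - t ^ a) - a * t ^ a * (t ^ b - 1)) / t / (2 * √(shockRadicand a b t))
        * t - (√(shockRadicand a b t) + k) * 1) / t ^ 2) t :=
    (((hasDerivAt_shockRadicand ht0).sqrt hg.ne').add_const k).div (hasDerivAt_id t) ht0.ne'
  rw [hD.deriv]
  have := mul_lt_mul_of_pos_left (two_mul_sqrt_shockRadicand_add_lt ha hb hab hk ht) ht0
  refine div_pos ?_ (by positivity)
  rw [sub_pos, mul_one, div_div, div_mul_eq_mul_div, lt_div_iff₀ (by positivity)]
  nlinarith [sq_sqrt hg.le]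

end ShockRadicand

section Overtaking

variable {γ x y : ℝ}

lemma kappa_pos (hγ : 1 < γ) : 0 < kappa γ :=
  div_pos (sqrt_pos.2 (by linarith)) (by linarith)

lemma shockExponents (hγ : 1 < γ) :
    -(1 : ℝ) / ((γ - 1) / 2) < 0 ∧ 0 < γ / ((γ - 1) / 2) ∧
      -(1 : ℝ) / ((γ - 1) / 2) + γ / ((γ - 1) / 2) = 2 := by
  have hα : 0 < (γ - 1) / 2 := by linarith
  refine ⟨div_neg_of_neg_of_pos (by norm_num) hα, div_pos (by linarith) hα, ?_⟩
  rw [← add_div, div_eq_iff hα.ne']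
  ring

lemma kappa_sq (hγ : 1 < γ) :
    kappa γ ^ 2 = -(-(1 : ℝ) / ((γ - 1) / 2) * (γ / ((γ - 1) / 2))) := by
  have hα : (γ - 1) / 2 ≠ 0 := by linarith
  rw [kappa, div_pow, sq_sqrt (by linarith)]
  field_simp

lemma strictMonoOn_shockPart_sub_mul (hγ : 1 < γ) :
    StrictMonoOn (fun t => shockPart γ t - kappa γ * t) (Ici 1) :=
  let ⟨ha, hb, hab⟩ := shockExponents hγ
  strictMonoOn_sqrt_shockRadicand_sub_mul ha hb hab (kappa_sq hγ)

lemma strictMonoOn_shockPart_add_div (hγ : 1 < γ) :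
    StrictMonoOn (fun t => (shockPart γ t + kappa γ) / t) (Ici 1) :=
  let ⟨ha, hb, hab⟩ := shockExponents hγ
  strictMonoOn_sqrt_shockRadicand_add_div ha hb hab (kappa_sq hγ)

lemma shockPart_one : shockPart γ 1 = 0 := by
  simp [shockPart]

lemma phiB_of_le_one (h : x ≤ 1) : phiB γ x = kappa γ * (x - 1) := if_pos h

lemma phiB_of_one_lt (h : 1 < x) : phiB γ x = shockPart γ x := if_neg h.not_ge

lemma phiB_one : phiB γ 1 = 0 := by
  simp [phiB_of_le_one]

lemma phiB_monotone (hγ : 1 < γ) : Monotone (phiB γ) := by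
  intro s t hst
  have hκ := kappa_pos hγ
  rcases le_or_gt t 1 with ht | ht
  · rw [phiB_of_le_one (hst.trans ht), phiB_of_le_one ht]
    gcongr
  rw [phiB_of_one_lt ht]
  rcases le_or_gt s 1 with hs | hs
  · rw [phiB_of_le_one hs]
    exact (mul_nonpos_of_nonneg_of_nonpos hκ.le (by linarith)).trans (sqrt_nonneg _)
  · rw [phiB_of_one_lt hs]
    have := (strictMonoOn_shockPart_sub_mul hγ).monotoneOn hs.le ht.le hst
    nlinarith [mul_nonneg hκ.le (sub_nonneg.2 hst)]

lemma phiB_mul_lt_of_one_lt_of_lt_one (hγ : 1 < γ) (hx : 1 < x) (hy : y < 1) :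
    phiB γ (x * y) < phiB γ x + x * phiB γ y := by
  rw [phiB_of_one_lt hx, phiB_of_le_one hy.le]
  rcases le_or_gt (x * y) 1 with hxy | hxy
  · have := strictMonoOn_shockPart_sub_mul hγ self_mem_Ici hx.le hx
    simp only [shockPart_one, mul_one] at this
    rw [phiB_of_le_one hxy]
    linarith
  · have := strictMonoOn_shockPart_sub_mul hγ hxy.le hx.le (by nlinarith)
    rw [phiB_of_one_lt hxy]
    linarith

lemma phiB_mul_lt_of_lt_one_of_one_lt (hγ : 1 < γ) (hx0 : 0 < x) (hx : x < 1) (hy : 1 < y) :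
    phiB γ (x * y) < phiB γ x + x * phiB γ y := by
  rw [phiB_of_le_one hx.le, phiB_of_one_lt hy]
  rcases le_or_gt (x * y) 1 with hxy | hxy
  · have := strictMonoOn_shockPart_sub_mul hγ self_mem_Ici hy.le hy
    simp only [shockPart_one, mul_one] at this
    rw [phiB_of_le_one hxy]
    nlinarith [mul_lt_mul_of_pos_left this hx0]
  · have := strictMonoOn_shockPart_add_div hγ hxy.le hy.le (by nlinarith)
    rw [div_lt_div_iff₀ (by linarith) (by linarith)] at this
    rw [phiB_of_one_lt hxy]
    refine lt_of_mul_lt_mul_right ?_ (zero_le_one.trans hy.le)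
    linarith

lemma phiB_mul_lt (hγ : 1 < γ) (hx : 0 < x) (hxy : (x - 1) * (y - 1) < 0) :
    phiB γ (x * y) < phiB γ x + x * phiB γ y := by
  rcases mul_neg_iff.1 hxy with ⟨hx1, hy1⟩ | ⟨hx1, hy1⟩
  · exact phiB_mul_lt_of_one_lt_of_lt_one hγ (by linarith) (by linarith)
  · exact phiB_mul_lt_of_lt_one_of_one_lt hγ hx (by linarith) (by linarith)

end Overtaking

theorem overtaking_SR_forward_shock_general (γ : ℝ) (hγ : 1 < γ)
    (x y B : ℝ) (hx : 0 < x) (hy : 0 < y) (hxy : (x - 1) * (y - 1) < 0)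
    (heq : phiB γ B + x * y * phiB γ (B / (x * y)) = phiB γ x + x * phiB γ y) :
    x * y < B := by
  by_contra! hB
  have hxy0 : 0 < x * y := mul_pos hx hy
  have hφB : phiB γ B ≤ phiB γ (x * y) := phiB_monotone hγ hB
  have hφquot : phiB γ (B / (x * y)) ≤ 0 :=
    (phiB_monotone hγ ((div_le_one hxy0).2 hB)).trans_eq phiB_one
  have := phiB_mul_lt hγ hx hxy
  nlinarith [mul_nonpos_of_nonneg_of_nonpos hxy0.le hφquot]

/-- for an overtaking interaction of a backward shock and a backward
    rarefaction (in either order, i.e. (x-1)(y-1) < 0), the outgoing forward wave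
    is always a shock (B > xy). -/
theorem overtaking_SR_forward_shock (γ : ℝ) (hγ : 1 < γ)
    (x y B : ℝ) (hx : 0 < x) (hy : 0 < y) (hxy : (x - 1) * (y - 1) < 0) (hB : 0 < B)
    (heq : phiB γ B + x * y * phiB γ (B / (x * y)) = phiB γ x + x * phiB γ y) :
    x * y < B :=
  overtaking_SR_forward_shock_general γ hγ x y B hx hy hxy heq
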